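/- Let L = ((C_1,b_1),…,(C_m,b_m)) be a decision list and, for ℓ ∈ [m-1], define μ_ℓ = P_{ρ~R_p}[max(U(L,ρ)) = ℓ and C_ℓ↾ρ ≡ 1]. Then for every ℓ ∈ [m-1], P_{ρ~R_p}[ℓ ∈ U(L,ρ)] ≤ μ_ℓ · ((1+p)/(1-p))^{|C_ℓ|}, where |C_ℓ| is the width of C_ℓ and p ∈ [0,1). -/

import Mathlib

noncomputable def rpWeight {n : ℕ} (p : ℝ) (ρ : Fin n → Option Bool) : ℝ :=
  ∏ i, if ρ i = none then p else (1 - p) / 2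

def clauseSat {n : ℕ} (C : Fin n → Option Bool) (x : Fin n → Bool) : Prop :=
  ∀ i : Fin n, ∀ b : Bool, C i = some b → x i = b

def clauseWidth {n : ℕ} (C : Fin n → Option Bool) : ℕ :=
  (Finset.univ.filter (fun i => C i ≠ none)).card

/-- `C ↾ ρ ≡ 1`: every literal of the clause `C` is satisfied by the restriction `ρ`. -/
def clauseFixedTrue {n : ℕ} (C ρ : Fin n → Option Bool) : Prop :=
  ∀ i : Fin n, ∀ b : Bool, C i = some b → ρ i = some b

def usefulIdx {n : ℕ} {V : Type} (L : List ((Fin n → Option Bool) × V))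
    (ρ : Fin n → Option Bool) (ℓ : Fin L.length) : Prop :=
  ∃ x : Fin n → Bool, clauseSat ρ x ∧ clauseSat (L.get ℓ).1 x ∧
    ∀ j : Fin L.length, j < ℓ → ¬ clauseSat (L.get j).1 x

/-! Map each `ρ` under which `ℓ` is useful to the pair `(ρ^(ℓ), Stars(ρ) ∩ Vars(C_ℓ))`. Since `ρ` is
consistent with `C_ℓ`, re-starring the second component in the first recovers `ρ`, so the map is
injective; and `ρ^(ℓ)` fixes `C_ℓ` to `1` while every input consistent with it satisfies `C_ℓ`, so `ℓ`
is its largest useful index. Re-starring a set `S` of fixed variables multiplies the weight by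
`(2p/(1-p))^|S|`, and summing over all `S ⊆ Vars(C_ℓ)` yields the factor `((1+p)/(1-p))^|C_ℓ|`. -/

open Finset

theorem Finset.sum_le_sum_of_leftInvOn {ι κ M : Type*} [AddCommMonoid M] [PartialOrder M]
    [IsOrderedAddMonoid M] {s : Finset ι} {t : Finset κ} {f : ι → κ} {g : κ → ι} {w : ι → M}
    (hf : Set.MapsTo f s t) (hgf : Set.LeftInvOn g f s) (hw : ∀ k ∈ t, 0 ≤ w (g k)) :
    ∑ i ∈ s, w i ≤ ∑ k ∈ t, w (g k) := by
  classical
  calc ∑ i ∈ s, w i = ∑ i ∈ s, w (g (f i)) := sum_congr rfl fun i hi => by rw [hgf hi]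
    _ = ∑ k ∈ s.image f, w (g k) := (sum_image (f := fun k => w (g k)) hgf.injOn).symm
    _ ≤ ∑ k ∈ t, w (g k) :=
      sum_le_sum_of_subset_of_nonneg (image_subset_iff.2 hf) fun k hk _ => hw k hk

section Restriction

variable {n : ℕ}

def clauseVars (C : Fin n → Option Bool) : Finset (Fin n) :=
  univ.filter fun i => C i ≠ none

/-- The restriction `ρ^(ℓ)` of the paper: `ρ` overwritten by the literals of `C`. -/
def augment (C ρ : Fin n → Option Bool) : Fin n → Option Bool :=
  fun i => (C i).or (ρ i)

def starOn (S : Finset (Fin n)) (σ : Fin n → Option Bool) : Fin n → Option Bool :=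
  fun i => if i ∈ S then none else σ i

theorem clauseFixedTrue_augment (C ρ : Fin n → Option Bool) : clauseFixedTrue C (augment C ρ) :=
  fun i b h => by simp [augment, h]

theorem clauseSat_of_clauseSat_augment {C ρ : Fin n → Option Bool} {x : Fin n → Bool}
    (h : clauseSat (augment C ρ) x) : clauseSat C x :=
  fun i b hi => h i b (by simp [augment, hi])

theorem clauseSat_augment {C ρ : Fin n → Option Bool} {x : Fin n → Bool}
    (hC : clauseSat C x) (hρ : clauseSat ρ x) : clauseSat (augment C ρ) x := by
  intro i b hi
  cases hCi : C i with
  | none => exact hρ i b (by simpa [augment, hCi] using hi)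
  | some c =>
    simp only [augment, hCi, Option.some_or, Option.some.injEq] at hi
    exact hi ▸ hC i c hCi

theorem starOn_augment {C ρ : Fin n → Option Bool} {x : Fin n → Bool}
    (hC : clauseSat C x) (hρ : clauseSat ρ x) :
    starOn ((clauseVars C).filter fun i => ρ i = none) (augment C ρ) = ρ := by
  funext i
  cases hρi : ρ i with
  | none => cases hCi : C i <;> simp [starOn, augment, clauseVars, hρi, hCi]
  | some b =>
    cases hCi : C i with
    | none => simp [starOn, augment, hρi, hCi]
    | some c => simp [starOn, augment, hρi, hCi, ← hC i c hCi, hρ i b hρi]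

theorem rpWeight_nonneg {p : ℝ} (hp0 : 0 ≤ p) (hp1 : p ≤ 1) (ρ : Fin n → Option Bool) :
    0 ≤ rpWeight p ρ :=
  prod_nonneg fun i _ => by split_ifs <;> linarith

theorem rpWeight_starOn {p : ℝ} (hp : p ≠ 1) {S : Finset (Fin n)} {σ : Fin n → Option Bool}
    (hS : ∀ i ∈ S, σ i ≠ none) :
    rpWeight p (starOn S σ) = rpWeight p σ * (2 * p / (1 - p)) ^ #S := by
  have h1p : 1 - p ≠ 0 := sub_ne_zero.2 hp.symm
  rw [← prod_const, ← Fintype.prod_ite_mem, rpWeight, rpWeight, ← prod_mul_distrib]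
  refine prod_congr rfl fun i _ => ?_
  by_cases hi : i ∈ S
  · simp only [starOn, hi, hS i hi, if_true, if_false]
    field_simp
  · simp [starOn, hi]

theorem sum_rpWeight_starOn_powerset {p : ℝ} (hp : p ≠ 1) {C σ : Fin n → Option Bool}
    (hσ : clauseFixedTrue C σ) :
    ∑ S ∈ (clauseVars C).powerset, rpWeight p (starOn S σ)
      = rpWeight p σ * ((1 + p) / (1 - p)) ^ clauseWidth C := by
  have hfixed : ∀ S ∈ (clauseVars C).powerset, ∀ i ∈ S, σ i ≠ none := by
    intro S hS i hi
    obtain ⟨b, hb⟩ := Option.ne_none_iff_exists'.1 (mem_filter.1 (mem_powerset.1 hS hi)).2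
    simp [hσ i b hb]
  have hbase : 2 * p / (1 - p) + 1 = (1 + p) / (1 - p) := by
    field_simp [sub_ne_zero.2 hp.symm]
    ring
  rw [sum_congr rfl fun S hS => rpWeight_starOn hp (hfixed S hS), ← mul_sum, ← hbase,
    clauseWidth, ← sum_pow_mul_eq_add_pow]
  simp only [one_pow, mul_one]
  rfl

end Restriction

section DecisionList

variable {n : ℕ} {V : Type} {L : List ((Fin n → Option Bool) × V)}

theorem usefulIdx_augment {ρ : Fin n → Option Bool} {ℓ : Fin L.length} (h : usefulIdx L ρ ℓ) :
    usefulIdx L (augment (L.get ℓ).1 ρ) ℓ := by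
  obtain ⟨x, hρ, hC, hprev⟩ := h
  exact ⟨x, clauseSat_augment hC hρ, hC, hprev⟩

theorem le_of_usefulIdx_augment {ρ : Fin n → Option Bool} {ℓ ℓ' : Fin L.length}
    (h : usefulIdx L (augment (L.get ℓ).1 ρ) ℓ') : ℓ' ≤ ℓ := by
  obtain ⟨y, hy, -, hprev⟩ := h
  by_contra! hlt
  exact hprev ℓ hlt (clauseSat_of_clauseSat_augment hy)

end DecisionList

theorem useful_prob_le_mu_general {n : ℕ} {V : Type} (L : List ((Fin n → Option Bool) × V))
    (p : ℝ) (hp0 : 0 ≤ p) (hp1 : p < 1)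
    (ℓ : Fin L.length) :
    ∑ ρ : Fin n → Option Bool,
        {σ : Fin n → Option Bool | usefulIdx L σ ℓ}.indicator (rpWeight p) ρ
      ≤ (∑ ρ : Fin n → Option Bool,
          {σ : Fin n → Option Bool |
            (usefulIdx L σ ℓ ∧ ∀ ℓ' : Fin L.length, usefulIdx L σ ℓ' → ℓ' ≤ ℓ) ∧
            clauseFixedTrue (L.get ℓ).1 σ}.indicator (rpWeight p) ρ)
        * ((1 + p) / (1 - p)) ^ clauseWidth (L.get ℓ).1 := by
  classical
  set C := (L.get ℓ).1
  simp only [Set.indicator_apply, Set.mem_ofPred_eq, ← sum_filter, sum_mul]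
  refine le_of_le_of_eq ?_ (sum_congr rfl fun σ hσ =>
    sum_rpWeight_starOn_powerset hp1.ne (mem_filter.1 hσ).2.2)
  rw [← sum_product']
  refine sum_le_sum_of_leftInvOn (g := fun q => starOn q.2 q.1)
    (f := fun ρ => (augment C ρ, (clauseVars C).filter fun i => ρ i = none))
    ?_ ?_ fun _ _ => rpWeight_nonneg hp0 hp1.le _
  · intro ρ hρ
    have hρ := (mem_filter.1 hρ).2
    refine mem_product.2 ⟨mem_filter.2 ⟨mem_univ _, ⟨usefulIdx_augment hρ,
      fun _ => le_of_usefulIdx_augment⟩, clauseFixedTrue_augment C ρ⟩, ?_⟩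
    exact mem_powerset.2 (filter_subset _ _)
  · intro ρ hρ
    obtain ⟨x, hρx, hCx, -⟩ := (mem_filter.1 hρ).2
    exact starOn_augment hCx hρx

/-- With `μ_ℓ = P_{ρ~R_p}[max U(L,ρ) = ℓ and C_ℓ↾ρ ≡ 1]`, for every non-final index `ℓ`:
`P_{ρ~R_p}[ℓ ∈ U(L,ρ)] ≤ μ_ℓ · ((1+p)/(1-p))^{|C_ℓ|}`. -/
theorem useful_prob_le_mu {n : ℕ} {V : Type} (L : List ((Fin n → Option Bool) × V))
    (htaut : ∀ x : Fin n → Bool, ∃ k : Fin L.length, clauseSat (L.get k).1 x)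
    (p : ℝ) (hp0 : 0 ≤ p) (hp1 : p < 1)
    (ℓ : Fin L.length) (hℓ : ℓ.val + 1 < L.length) :
    ∑ ρ : Fin n → Option Bool,
        {σ : Fin n → Option Bool | usefulIdx L σ ℓ}.indicator (rpWeight p) ρ
      ≤ (∑ ρ : Fin n → Option Bool,
          {σ : Fin n → Option Bool |
            (usefulIdx L σ ℓ ∧ ∀ ℓ' : Fin L.length, usefulIdx L σ ℓ' → ℓ' ≤ ℓ) ∧
            clauseFixedTrue (L.get ℓ).1 σ}.indicator (rpWeight p) ρ)
        * ((1 + p) / (1 - p)) ^ clauseWidth (L.get ℓ).1 :=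
  useful_prob_le_mu_general L p hp0 hp1 ℓ
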